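/- arXiv:2105.14094 — 2 statements merged into one kernel-verified Lean document; each statement's English description precedes it below -/
import Mathlib

section
/- Let X be a real inner product space with inner product a and norm |||·|||. Let u, u₀ ∈ X with u ≠ u₀, set φ₁ = (u-u₀)/|||u-u₀|||, and let φ₁ᴺᴺ ∈ X be a unit vector with |||φ₁ - φ₁ᴺᴺ||| < δ for some δ > 0. Let S be a subspace of X containing u₀ and φ₁ᴺᴺ, and let u₁ be the orthogonal projection of u onto S with respect to a. Then |||u - u₁||| ≤ |||u - u₀||| · min(1, δ). -/
open RealInnerProductSpace

theorem galerkin_error_reduction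
    {X : Type*} [NormedAddCommGroup X] [InnerProductSpace ℝ X]
    (u u₀ : X) (h : u ≠ u₀)
    (φ₁ : X) (hφ₁ : φ₁ = ‖u - u₀‖⁻¹ • (u - u₀))
    (φNN : X) (hφNNnorm : ‖φNN‖ = 1) (δ : ℝ) (hδ : 0 < δ)
    (hclose : ‖φ₁ - φNN‖ < δ)
    (S : Submodule ℝ X) (hu₀S : u₀ ∈ S) (hφNNS : φNN ∈ S)
    (u₁ : X) (hu₁S : u₁ ∈ S) (hproj : ∀ v ∈ S, ⟪u - u₁, v⟫ = 0) :
    ‖u - u₁‖ ≤ ‖u - u₀‖ * min 1 δ := by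
  have hne : ‖u - u₀‖ ≠ 0 := by
    simpa [sub_eq_zero] using h
  have best : ∀ v ∈ S, ‖u - u₁‖ ≤ ‖u - v‖ := by
    intro v hv
    have h0 : ⟪u - u₁, u₁ - v⟫ = 0 := hproj _ (S.sub_mem hu₁S hv)
    have hsq : ‖u - v‖^2 = ‖u - u₁‖^2 + ‖u₁ - v‖^2 := by
      have := norm_add_sq_real (u - u₁) (u₁ - v)
      simpa [h0, sub_add_sub_cancel] using this
    nlinarith [norm_nonneg (u - v), norm_nonneg (u - u₁), sq_nonneg ‖u₁ - v‖]
  have b1 : ‖u - u₁‖ ≤ ‖u - u₀‖ := best u₀ hu₀S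
  have hvS : u₀ + ‖u - u₀‖ • φNN ∈ S := S.add_mem hu₀S (S.smul_mem _ hφNNS)
  have key : u - (u₀ + ‖u - u₀‖ • φNN) = ‖u - u₀‖ • (φ₁ - φNN) := by
    rw [hφ₁, smul_sub, smul_inv_smul₀ hne]
    abel
  have b2 : ‖u - u₁‖ ≤ ‖u - u₀‖ * δ := by
    calc ‖u - u₁‖ ≤ ‖u - (u₀ + ‖u - u₀‖ • φNN)‖ := best _ hvS
      _ = ‖u - u₀‖ * ‖φ₁ - φNN‖ := by
          rw [key, norm_smul, Real.norm_eq_abs, abs_of_nonneg (norm_nonneg _)]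
      _ ≤ ‖u - u₀‖ * δ := by
          exact mul_le_mul_of_nonneg_left hclose.le (norm_nonneg _)
  rcases min_cases 1 δ with ⟨hm, _⟩ | ⟨hm, _⟩ <;> rw [hm] <;> linarith
end

section
/- Let X be a real inner product space with inner product a and norm |||·|||. Let u, u₀ ∈ X with u ≠ u₀ and let φ₁ᴺᴺ ∈ X be a unit vector satisfying |||φ₁ - φ₁ᴺᴺ||| < 2τ/(1-τ) where φ₁ = (u-u₀)/|||u-u₀||| and 0 < τ < 1/3. Define η = a(u - u₀, φ₁ᴺᴺ). Then ((1-τ)/(1+τ))·η ≤ |||u - u₀||| ≤ ((1-τ)/(1-3τ))·η. -/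
open RealInnerProductSpace

theorem error_estimator_equivalence
    {X : Type*} [NormedAddCommGroup X] [InnerProductSpace ℝ X]
    (u u₀ : X) (h : u ≠ u₀)
    (τ : ℝ) (hτ0 : 0 < τ) (hτ : τ < 1/3)
    (φ₁ φNN : X) (hφ₁ : φ₁ = ‖u - u₀‖⁻¹ • (u - u₀))
    (hφNNnorm : ‖φNN‖ = 1) (hclose : ‖φ₁ - φNN‖ < 2 * τ / (1 - τ))
    (η : ℝ) (hη : η = ⟪u - u₀, φNN⟫) :
    (1 - τ) / (1 + τ) * η ≤ ‖u - u₀‖ ∧ ‖u - u₀‖ ≤ (1 - τ) / (1 - 3 * τ) * η := by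
  have he : u - u₀ ≠ 0 := sub_ne_zero.mpr h
  have hne : (0:ℝ) < ‖u - u₀‖ := norm_pos_iff.mpr he
  have hτ1 : (0:ℝ) < 1 - τ := by linarith
  have hφ₁norm : ‖φ₁‖ = 1 := by
    rw [hφ₁, norm_smul, norm_inv, norm_norm, inv_mul_cancel₀ hne.ne']
  set c : ℝ := ⟪φ₁, φNN⟫ with hcdef
  set d : ℝ := ‖φ₁ - φNN‖ with hddef
  have hd0 : 0 ≤ d := norm_nonneg _
  have hc : c = 1 - d ^ 2 / 2 := by
    have hsq : d ^ 2 = ‖φ₁‖ ^ 2 - 2 * c + ‖φNN‖ ^ 2 :=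
      norm_sub_sq_real φ₁ φNN
    rw [hφ₁norm, hφNNnorm] at hsq
    linarith
  have hc1 : c ≤ 1 := by
    calc c ≤ ‖φ₁‖ * ‖φNN‖ := real_inner_le_norm _ _
    _ = 1 := by rw [hφ₁norm, hφNNnorm]; ring
  have hηc : η = ‖u - u₀‖ * c := by
    rw [hη, hcdef, hφ₁, real_inner_smul_left]
    field_simp
  -- d bound
  have hdbound : d * (1 - τ) < 2 * τ := by
    have := (lt_div_iff₀ hτ1).mp hclose
    linarith
  have hclow : (1 - 3 * τ) ≤ c * (1 - τ) := by
    nlinarith [sq_nonneg (d * (1 - τ)), sq_nonneg d, mul_pos hτ0 hτ1, sq_nonneg (1 - τ)]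
  have hcpos : 0 < c := by nlinarith
  have hηpos : 0 < η := by rw [hηc]; positivity
  constructor
  · rw [hηc]
    rw [div_mul_eq_mul_div, div_le_iff₀ (by linarith : (0:ℝ) < 1 + τ)]
    nlinarith
  · rw [hηc, div_mul_eq_mul_div, le_div_iff₀ (by linarith : (0:ℝ) < 1 - 3 * τ)]
    nlinarith
end
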